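/- With F(q,n) = 2^q / C(2n,q) and R(q,n) = (2n+1−q)·[3q(2n+1) − 2(2n+1)(5n+6)] / (2(n+1)(2n+1)), for all integers n ≥ 1 and 0 ≤ q ≤ 2n−1 one has 9(2n+1)·F(q,n+1) − 4(2n+3)·F(q,n) = F(q+1,n)·R(q+1,n) − F(q,n)·R(q,n). -/
import Mathlib


noncomputable def F (q n : ℕ) : ℝ := (2 : ℝ) ^ q / (Nat.choose (2 * n) q : ℝ)

noncomputable def R (q n : ℕ) : ℝ :=
  ((2 * (n : ℝ) + 1 - q) *
      (3 * (q : ℝ) * (2 * n + 1) - 2 * (2 * (n : ℝ) + 1) * (5 * n + 6))) /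
    (2 * ((n : ℝ) + 1) * (2 * (n : ℝ) + 1))

theorem WZ_identity (n q : ℕ) (hn : 1 ≤ n) (hq : q ≤ 2 * n - 1) :
    9 * (2 * (n : ℝ) + 1) * F q (n + 1) - 4 * (2 * (n : ℝ) + 3) * F q n =
      F (q + 1) n * R (q + 1) n - F q n * R q n := by
  have hq1 : q + 1 ≤ 2 * n := by omega
  have hq0 : q ≤ 2 * n := by omega
  have hQN : (q : ℝ) ≤ 2 * n - 1 := by
    have : (q : ℝ) ≤ ((2 * n - 1 : ℕ) : ℝ) := by exact_mod_cast hq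
    rw [Nat.cast_sub (by omega)] at this
    push_cast at this
    linarith
  have hN1 : (1 : ℝ) ≤ (n : ℝ) := by exact_mod_cast hn
  have hapos : (0 : ℝ) < ((2 * n).choose q : ℝ) := by exact_mod_cast Nat.choose_pos hq0
  have hbpos : (0 : ℝ) < ((2 * n).choose (q + 1) : ℝ) := by exact_mod_cast Nat.choose_pos hq1
  have hdpos : (0 : ℝ) < ((2 * (n + 1)).choose q : ℝ) := by
    exact_mod_cast Nat.choose_pos (by omega : q ≤ 2 * (n + 1))
  -- nonzero facts
  have h1 : (q : ℝ) + 1 ≠ 0 := by positivity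
  have h2 : 2 * (n : ℝ) + 1 - q ≠ 0 := by nlinarith
  have h3 : 2 * (n : ℝ) + 2 - q ≠ 0 := by nlinarith
  have h9 : 2 * (n : ℝ) - q ≠ 0 := by nlinarith
  have h4 : (n : ℝ) + 1 ≠ 0 := by positivity
  have h5 : 2 * (n : ℝ) + 1 ≠ 0 := by positivity
  have h6 : ((2 * n).choose q : ℝ) ≠ 0 := ne_of_gt hapos
  have h7 : ((2 * (n + 1)).choose q : ℝ) ≠ 0 := ne_of_gt hdpos
  have h8 : ((2 * n).choose (q + 1) : ℝ) ≠ 0 := ne_of_gt hbpos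
  -- relation for b
  have hrb : ((2 * n).choose (q + 1) : ℝ) * ((q : ℝ) + 1)
      = ((2 * n).choose q : ℝ) * (2 * (n : ℝ) - q) := by
    have h := Nat.choose_succ_right_eq (2 * n) q
    have h2' : (((2 * n).choose (q + 1) * (q + 1) : ℕ) : ℝ)
        = (((2 * n).choose q * (2 * n - q) : ℕ) : ℝ) := by rw [h]
    rw [Nat.cast_mul, Nat.cast_mul, Nat.cast_sub hq0] at h2'
    push_cast at h2'
    linarith
  -- relations for d
  have hr1 : ((2 * n).choose q : ℝ) * (2 * (n : ℝ) + 1)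
      = ((2 * n + 1).choose q : ℝ) * (2 * (n : ℝ) + 1 - q) := by
    have h := Nat.choose_mul_succ_eq (2 * n) q
    have h2' : (((2 * n).choose q * (2 * n + 1) : ℕ) : ℝ)
        = (((2 * n + 1).choose q * (2 * n + 1 - q) : ℕ) : ℝ) := by rw [h]
    rw [Nat.cast_mul, Nat.cast_mul, Nat.cast_sub (by omega)] at h2'
    push_cast at h2'
    linarith
  have hr2 : ((2 * n + 1).choose q : ℝ) * (2 * (n : ℝ) + 2)
      = ((2 * (n + 1)).choose q : ℝ) * (2 * (n : ℝ) + 2 - q) := by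
    have h := Nat.choose_mul_succ_eq (2 * n + 1) q
    have h2' : (((2 * n + 1).choose q * (2 * n + 1 + 1) : ℕ) : ℝ)
        = (((2 * n + 1 + 1).choose q * (2 * n + 1 + 1 - q) : ℕ) : ℝ) := by rw [h]
    rw [Nat.cast_mul, Nat.cast_mul, Nat.cast_sub (by omega)] at h2'
    have he : 2 * n + 1 + 1 = 2 * (n + 1) := by omega
    rw [he] at h2'
    push_cast at h2'
    linarith
  have hrd : ((2 * n).choose q : ℝ) * (2 * (n : ℝ) + 1) * (2 * (n : ℝ) + 2)
      = ((2 * (n + 1)).choose q : ℝ) * (2 * (n : ℝ) + 2 - q) * (2 * (n : ℝ) + 1 - q) := by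
    linear_combination (2 * (n : ℝ) + 2) * hr1 + (2 * (n : ℝ) + 1 - q) * hr2
  -- solve for b and d
  have hb' : ((2 * n).choose (q + 1) : ℝ)
      = ((2 * n).choose q : ℝ) * (2 * (n : ℝ) - q) / ((q : ℝ) + 1) := by
    rw [eq_div_iff h1]; exact hrb
  have hd' : ((2 * (n + 1)).choose q : ℝ)
      = ((2 * n).choose q : ℝ) * (2 * (n : ℝ) + 1) * (2 * (n : ℝ) + 2) /
        ((2 * (n : ℝ) + 2 - q) * (2 * (n : ℝ) + 1 - q)) := by
    rw [eq_div_iff (mul_ne_zero h3 h2)]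
    rw [hrd]; ring
  simp only [F, R]
  rw [hb', hd']
  push_cast
  field_simp
  ring
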